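/- arXiv:math/0512563 — 2 statements merged into one kernel-verified Lean document; each statement's English description precedes it below -/
import Mathlib

section
/- In D_q, the element C := FE + (Kq + K̃⁻¹q⁻¹)/(q − q⁻¹)² satisfies C = EF + (Kq⁻¹ + K̃⁻¹q)/(q − q⁻¹)², and C is central in D_q: it commutes with E, F, K, K⁻¹, K̃ and K̃⁻¹, hence with every element of D_q. Moreover, the element KK̃⁻¹ is also central in D_q. -/
noncomputable section

/-- Generators of the quantum double `D_q`. -/
inductive DGen : Type
  | E | F | K | Kinv | Kt | Ktinv
  deriving DecidableEq

/-- The defining relations of `D_q`. -/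
inductive DRel (k : Type) [Field k] (q : k) :
    FreeAlgebra k DGen → FreeAlgebra k DGen → Prop
  | KE : DRel k q (FreeAlgebra.ι k DGen.K * FreeAlgebra.ι k DGen.E)
      ((q ^ 2) • (FreeAlgebra.ι k DGen.E * FreeAlgebra.ι k DGen.K))
  | KF : DRel k q (FreeAlgebra.ι k DGen.K * FreeAlgebra.ι k DGen.F)
      (((q ^ 2)⁻¹) • (FreeAlgebra.ι k DGen.F * FreeAlgebra.ι k DGen.K))
  | KtE : DRel k q (FreeAlgebra.ι k DGen.Kt * FreeAlgebra.ι k DGen.E)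
      ((q ^ 2) • (FreeAlgebra.ι k DGen.E * FreeAlgebra.ι k DGen.Kt))
  | KtF : DRel k q (FreeAlgebra.ι k DGen.Kt * FreeAlgebra.ι k DGen.F)
      (((q ^ 2)⁻¹) • (FreeAlgebra.ι k DGen.F * FreeAlgebra.ι k DGen.Kt))
  | KKinv : DRel k q (FreeAlgebra.ι k DGen.K * FreeAlgebra.ι k DGen.Kinv) 1
  | KinvK : DRel k q (FreeAlgebra.ι k DGen.Kinv * FreeAlgebra.ι k DGen.K) 1
  | KtKtinv : DRel k q (FreeAlgebra.ι k DGen.Kt * FreeAlgebra.ι k DGen.Ktinv) 1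
  | KtinvKt : DRel k q (FreeAlgebra.ι k DGen.Ktinv * FreeAlgebra.ι k DGen.Kt) 1
  | KKt : DRel k q (FreeAlgebra.ι k DGen.K * FreeAlgebra.ι k DGen.Kt)
      (FreeAlgebra.ι k DGen.Kt * FreeAlgebra.ι k DGen.K)
  | EF : DRel k q (FreeAlgebra.ι k DGen.E * FreeAlgebra.ι k DGen.F)
      (FreeAlgebra.ι k DGen.F * FreeAlgebra.ι k DGen.E +
        ((q - q⁻¹)⁻¹) • (FreeAlgebra.ι k DGen.K - FreeAlgebra.ι k DGen.Ktinv))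

/-- The quantum double `D_q` of `U_q(sl2)^{≤0}`, presented by generators and relations. -/
abbrev Dq (k : Type) [Field k] (q : k) := RingQuot (DRel k q)

def DE (k : Type) [Field k] (q : k) : Dq k q :=
  RingQuot.mkAlgHom k (DRel k q) (FreeAlgebra.ι k DGen.E)
def DF (k : Type) [Field k] (q : k) : Dq k q :=
  RingQuot.mkAlgHom k (DRel k q) (FreeAlgebra.ι k DGen.F)
def DK (k : Type) [Field k] (q : k) : Dq k q :=
  RingQuot.mkAlgHom k (DRel k q) (FreeAlgebra.ι k DGen.K)
def DKinv (k : Type) [Field k] (q : k) : Dq k q :=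
  RingQuot.mkAlgHom k (DRel k q) (FreeAlgebra.ι k DGen.Kinv)
def DKt (k : Type) [Field k] (q : k) : Dq k q :=
  RingQuot.mkAlgHom k (DRel k q) (FreeAlgebra.ι k DGen.Kt)
def DKtinv (k : Type) [Field k] (q : k) : Dq k q :=
  RingQuot.mkAlgHom k (DRel k q) (FreeAlgebra.ι k DGen.Ktinv)

/-- The quantum integer `[n]_q = (qⁿ - q⁻ⁿ)/(q - q⁻¹)`. -/
def qint (k : Type) [Field k] (q : k) (n : ℕ) : k := (q ^ n - q⁻¹ ^ n) / (q - q⁻¹)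

/-- The quantum factorial `[n]_q!`. -/
def qfact (k : Type) [Field k] (q : k) : ℕ → k
  | 0 => 1
  | n + 1 => qfact k q n * qint k q (n + 1)

/-- The Gaussian binomial coefficient `[m choose n]_q`. -/
def qbinom (k : Type) [Field k] (q : k) (m n : ℕ) : k :=
  qfact k q m / (qfact k q n * qfact k q (m - n))

/-- The element `[K,K̃;c;t] = ∏_{s=1}^t (K q^{c-s+1} - K̃⁻¹ q^{-c+s-1})/(q^s - q^{-s})` of `D_q`. -/
def KKtc (k : Type) [Field k] (q : k) (c : ℤ) : ℕ → Dq k q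
  | 0 => 1
  | t + 1 =>
      KKtc k q c t *
        ((q ^ ((t : ℤ) + 1) - q ^ (-((t : ℤ) + 1)))⁻¹ •
          (q ^ (c - (t : ℤ)) • DK k q - q ^ ((t : ℤ) - c) • DKtinv k q))

/-!
Write `s = (q - q⁻¹)⁻¹`, so that `EF = FE + s (K - K̃⁻¹)`. Everything rests on the identity
`s² (q - q⁻¹) = s`, valid in every field: it makes the two expressions for `C` agree, and it matches
the coefficients of `EK`, `EK̃⁻¹` (resp. `FK`, `FK̃⁻¹`) when `E` (resp. `F`) is moved past `C`.
The group-likes `K` and `K̃` scale `E` by `q²` and `F` by `q⁻²`, so they commute with `FE`, hence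
with `C`, and `KK̃⁻¹` commutes with `E` and `F`. As `D_q` is generated by `E, F, K, K̃` and the
inverses of `K, K̃`, commuting with `E, F, K, K̃` already means being central.
-/

section SkewCommute

variable {R A : Type*} [CommSemiring R] [Semiring A] [Algebra R A]

theorem Units.inv_mul_eq_smul_mul_inv (u : Aˣ) {a : A} {c d : R} (h : ↑u * a = c • (a * ↑u))
    (hcd : c * d = 1) : ↑u⁻¹ * a = d • (a * ↑u⁻¹) := by
  calc ↑u⁻¹ * a = ↑u⁻¹ * ((d * c) • (a * ↑u)) * ↑u⁻¹ := by
        rw [mul_comm d, hcd, one_smul, mul_assoc, Units.mul_inv_cancel_right]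
    _ = d • (↑u⁻¹ * (↑u * a) * ↑u⁻¹) := by
        rw [h, mul_smul, mul_smul_comm, smul_mul_assoc]
    _ = d • (a * ↑u⁻¹) := by rw [Units.inv_mul_cancel_left]

theorem commute_mul_right_of_mul_eq_smul {u a b : A} {c d : R} (ha : u * a = c • (a * u))
    (hb : u * b = d • (b * u)) (hcd : c * d = 1) : Commute u (a * b) := by
  calc u * (a * b) = c • (a * (u * b)) := by rw [← mul_assoc, ha, smul_mul_assoc, mul_assoc]
    _ = (c * d) • (a * b * u) := by rw [hb, mul_smul_comm, smul_smul, mul_assoc]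
    _ = a * b * u := by rw [hcd, one_smul]

theorem commute_mul_left_of_mul_eq_smul {u v a : A} {c d : R} (hu : u * a = c • (a * u))
    (hv : v * a = d • (a * v)) (hcd : c * d = 1) : Commute (u * v) a := by
  calc u * v * a = d • (u * a * v) := by rw [mul_assoc, hv, mul_smul_comm, mul_assoc]
    _ = (c * d) • (a * (u * v)) := by rw [hu, smul_mul_assoc, smul_smul, mul_comm d, mul_assoc]
    _ = a * (u * v) := by rw [hcd, one_smul]

end SkewCommute

theorem inv_sq_mul_self {G₀ : Type*} [CommGroupWithZero G₀] (a : G₀) : a⁻¹ ^ 2 * a = a⁻¹ := by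
  simpa only [sq, inv_inv] using mul_self_mul_inv a⁻¹

namespace Dq

variable {k : Type} [Field k] {q : k}

theorem DK_mul_DE : DK k q * DE k q = q ^ 2 • (DE k q * DK k q) := by
  simpa only [DE, DK, map_mul, map_smul] using RingQuot.mkAlgHom_rel k (DRel.KE (q := q))

theorem DK_mul_DF : DK k q * DF k q = (q ^ 2)⁻¹ • (DF k q * DK k q) := by
  simpa only [DF, DK, map_mul, map_smul] using RingQuot.mkAlgHom_rel k (DRel.KF (q := q))

theorem DKt_mul_DE : DKt k q * DE k q = q ^ 2 • (DE k q * DKt k q) := by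
  simpa only [DE, DKt, map_mul, map_smul] using RingQuot.mkAlgHom_rel k (DRel.KtE (q := q))

theorem DKt_mul_DF : DKt k q * DF k q = (q ^ 2)⁻¹ • (DF k q * DKt k q) := by
  simpa only [DF, DKt, map_mul, map_smul] using RingQuot.mkAlgHom_rel k (DRel.KtF (q := q))

theorem DK_mul_DKinv : DK k q * DKinv k q = 1 := by
  simpa only [DK, DKinv, map_mul, map_one] using RingQuot.mkAlgHom_rel k (DRel.KKinv (q := q))

theorem DKinv_mul_DK : DKinv k q * DK k q = 1 := by
  simpa only [DK, DKinv, map_mul, map_one] using RingQuot.mkAlgHom_rel k (DRel.KinvK (q := q))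

theorem DKt_mul_DKtinv : DKt k q * DKtinv k q = 1 := by
  simpa only [DKt, DKtinv, map_mul, map_one] using RingQuot.mkAlgHom_rel k (DRel.KtKtinv (q := q))

theorem DKtinv_mul_DKt : DKtinv k q * DKt k q = 1 := by
  simpa only [DKt, DKtinv, map_mul, map_one] using RingQuot.mkAlgHom_rel k (DRel.KtinvKt (q := q))

theorem commute_DK_DKt : Commute (DK k q) (DKt k q) := by
  simpa only [Commute, SemiconjBy, DK, DKt, map_mul] using
    RingQuot.mkAlgHom_rel k (DRel.KKt (q := q))

theorem DE_mul_DF :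
    DE k q * DF k q = DF k q * DE k q + (q - q⁻¹)⁻¹ • (DK k q - DKtinv k q) := by
  simpa only [DE, DF, DK, DKtinv, map_mul, map_add, map_smul, map_sub] using
    RingQuot.mkAlgHom_rel k (DRel.EF (q := q))

variable (k q) in
def unitK : (Dq k q)ˣ := ⟨DK k q, DKinv k q, DK_mul_DKinv, DKinv_mul_DK⟩

variable (k q) in
def unitKt : (Dq k q)ˣ := ⟨DKt k q, DKtinv k q, DKt_mul_DKtinv, DKtinv_mul_DKt⟩

theorem DKtinv_mul_DE (hq0 : q ≠ 0) : DKtinv k q * DE k q = (q ^ 2)⁻¹ • (DE k q * DKtinv k q) :=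
  (unitKt k q).inv_mul_eq_smul_mul_inv DKt_mul_DE (mul_inv_cancel₀ (pow_ne_zero 2 hq0))

theorem DKtinv_mul_DF (hq0 : q ≠ 0) : DKtinv k q * DF k q = q ^ 2 • (DF k q * DKtinv k q) :=
  (unitKt k q).inv_mul_eq_smul_mul_inv DKt_mul_DF (inv_mul_cancel₀ (pow_ne_zero 2 hq0))

theorem commute_DK_DKtinv : Commute (DK k q) (DKtinv k q) :=
  commute_DK_DKt.units_inv_right (u := unitKt k q)

theorem commute_DKt_DKtinv : Commute (DKt k q) (DKtinv k q) :=
  (Commute.refl _).units_inv_right (u := unitKt k q)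

theorem adjoin_range_generators :
    Algebra.adjoin k (Set.range fun g => RingQuot.mkAlgHom k (DRel k q) (FreeAlgebra.ι k g)) =
      ⊤ := by
  rw [Set.range_comp' .., Algebra.adjoin_image, FreeAlgebra.adjoin_range_ι, Algebra.map_top,
    AlgHom.range_eq_top]
  exact RingQuot.mkAlgHom_surjective k (DRel k q)

theorem commute_of_commute_generators {c : Dq k q} (hE : Commute c (DE k q))
    (hF : Commute c (DF k q)) (hK : Commute c (DK k q)) (hKt : Commute c (DKt k q)) (x : Dq k q) :
    Commute c x := by
  refine Algebra.commute_of_mem_adjoin_of_forall_mem_commute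
    (adjoin_range_generators (q := q) ▸ Algebra.mem_top) ?_
  rintro _ ⟨g, rfl⟩
  cases g
  exacts [hE, hF, hK, hK.units_inv_right (u := unitK k q), hKt,
    hKt.units_inv_right (u := unitKt k q)]

variable (k q) in
def casimir : Dq k q :=
  DF k q * DE k q + ((q - q⁻¹) ^ 2)⁻¹ • (q • DK k q + q⁻¹ • DKtinv k q)

theorem casimir_eq :
    casimir k q = DE k q * DF k q + ((q - q⁻¹) ^ 2)⁻¹ • (q⁻¹ • DK k q + q • DKtinv k q) := by
  have hs := inv_sq_mul_self (q - q⁻¹)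
  rw [casimir, DE_mul_DF, ← inv_pow]
  match_scalars
  · rfl
  · linear_combination hs
  · linear_combination -hs

theorem commute_casimir_DE (hq0 : q ≠ 0) : Commute (casimir k q) (DE k q) := by
  set s := (q - q⁻¹)⁻¹ with hs_def
  have hs : s ^ 2 * (q - q⁻¹) = s := inv_sq_mul_self _
  have hq : q * q⁻¹ = 1 := mul_inv_cancel₀ hq0
  calc casimir k q * DE k q
      = DF k q * DE k q * DE k q + (s ^ 2 * q ^ 3) • (DE k q * DK k q)
          + (s ^ 2 * q⁻¹ ^ 3) • (DE k q * DKtinv k q) := by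
        rw [casimir, ← inv_pow, ← hs_def]
        simp only [add_mul, smul_mul_assoc, DK_mul_DE, DKtinv_mul_DE hq0]
        module
    _ = DE k q * casimir k q := by
        rw [casimir, ← inv_pow, ← hs_def, mul_add, ← mul_assoc, DE_mul_DF, ← hs_def]
        simp only [add_mul, sub_mul, mul_add, smul_mul_assoc, mul_smul_comm, DK_mul_DE,
          DKtinv_mul_DE hq0]
        match_scalars
        · rfl
        · linear_combination q ^ 2 * hs + s ^ 2 * q * hq
        · linear_combination -q⁻¹ ^ 2 * hs + s ^ 2 * q⁻¹ * hq

theorem commute_casimir_DF (hq0 : q ≠ 0) : Commute (casimir k q) (DF k q) := by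
  set s := (q - q⁻¹)⁻¹ with hs_def
  have hs : s ^ 2 * (q - q⁻¹) = s := inv_sq_mul_self _
  have hq : q * q⁻¹ = 1 := mul_inv_cancel₀ hq0
  calc casimir k q * DF k q
      = DF k q * DF k q * DE k q + (s + s ^ 2 * q⁻¹) • (DF k q * DK k q)
          + (s ^ 2 * q - s) • (DF k q * DKtinv k q) := by
        rw [casimir, ← inv_pow, ← hs_def, add_mul, mul_assoc (DF k q), DE_mul_DF, ← hs_def]
        simp only [add_mul, mul_add, mul_sub, smul_mul_assoc, mul_smul_comm, ← mul_assoc,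
          DK_mul_DF, DKtinv_mul_DF hq0]
        match_scalars
        · rfl
        · linear_combination s ^ 2 * q⁻¹ * hq
        · linear_combination s ^ 2 * q * hq
    _ = DF k q * casimir k q := by
        rw [casimir, ← inv_pow, ← hs_def]
        simp only [mul_add, mul_smul_comm, ← mul_assoc]
        match_scalars
        · rfl
        · linear_combination -hs
        · linear_combination hs

theorem commute_casimir_of_mul_DE_of_mul_DF (hq0 : q ≠ 0) {u : Dq k q}
    (hE : u * DE k q = q ^ 2 • (DE k q * u)) (hF : u * DF k q = (q ^ 2)⁻¹ • (DF k q * u))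
    (hK : Commute u (DK k q)) (hKtinv : Commute u (DKtinv k q)) : Commute u (casimir k q) :=
  (commute_mul_right_of_mul_eq_smul hF hE (inv_mul_cancel₀ (pow_ne_zero 2 hq0))).add_right
    (((hK.smul_right q).add_right (hKtinv.smul_right q⁻¹)).smul_right _)

theorem commute_casimir (hq0 : q ≠ 0) (x : Dq k q) : Commute (casimir k q) x :=
  commute_of_commute_generators (commute_casimir_DE hq0) (commute_casimir_DF hq0)
    (commute_casimir_of_mul_DE_of_mul_DF hq0 DK_mul_DE DK_mul_DF (.refl _) commute_DK_DKtinv).symm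
    (commute_casimir_of_mul_DE_of_mul_DF hq0 DKt_mul_DE DKt_mul_DF commute_DK_DKt.symm
      commute_DKt_DKtinv).symm x

theorem commute_DK_mul_DKtinv (hq0 : q ≠ 0) (x : Dq k q) : Commute (DK k q * DKtinv k q) x := by
  have hq2 : q ^ 2 ≠ 0 := pow_ne_zero 2 hq0
  refine commute_of_commute_generators ?_ ?_ ?_ ?_ x
  · exact commute_mul_left_of_mul_eq_smul DK_mul_DE (DKtinv_mul_DE hq0) (mul_inv_cancel₀ hq2)
  · exact commute_mul_left_of_mul_eq_smul DK_mul_DF (DKtinv_mul_DF hq0) (inv_mul_cancel₀ hq2)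
  · exact (Commute.refl _).mul_left commute_DK_DKtinv.symm
  · exact commute_DK_DKt.mul_left commute_DKt_DKtinv.symm

end Dq

theorem casimir_central_general (k : Type) [Field k] (q : k)
    (hq0 : q ≠ 0) :
    (DF k q * DE k q + ((q - q⁻¹) ^ 2)⁻¹ • (q • DK k q + q⁻¹ • DKtinv k q) =
      DE k q * DF k q + ((q - q⁻¹) ^ 2)⁻¹ • (q⁻¹ • DK k q + q • DKtinv k q)) ∧
    (∀ x : Dq k q,
      (DF k q * DE k q + ((q - q⁻¹) ^ 2)⁻¹ • (q • DK k q + q⁻¹ • DKtinv k q)) * x =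
        x * (DF k q * DE k q + ((q - q⁻¹) ^ 2)⁻¹ • (q • DK k q + q⁻¹ • DKtinv k q))) ∧
    (∀ x : Dq k q,
      (DK k q * DKtinv k q) * x = x * (DK k q * DKtinv k q)) :=
  ⟨Dq.casimir_eq, fun x => (Dq.commute_casimir hq0 x).eq,
    fun x => (Dq.commute_DK_mul_DKtinv hq0 x).eq⟩

/-- the Casimir element `C = FE + (Kq + K̃⁻¹q⁻¹)/(q − q⁻¹)²` equals
`EF + (Kq⁻¹ + K̃⁻¹q)/(q − q⁻¹)²` and is central in `D_q`; the element `KK̃⁻¹` is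
central as well. -/
theorem casimir_central (k : Type) [Field k] (q : k)
    (hq0 : q ≠ 0) (hq1 : q ^ 2 ≠ 1) :
    (DF k q * DE k q + ((q - q⁻¹) ^ 2)⁻¹ • (q • DK k q + q⁻¹ • DKtinv k q) =
      DE k q * DF k q + ((q - q⁻¹) ^ 2)⁻¹ • (q⁻¹ • DK k q + q • DKtinv k q)) ∧
    (∀ x : Dq k q,
      (DF k q * DE k q + ((q - q⁻¹) ^ 2)⁻¹ • (q • DK k q + q⁻¹ • DKtinv k q)) * x =
        x * (DF k q * DE k q + ((q - q⁻¹) ^ 2)⁻¹ • (q • DK k q + q⁻¹ • DKtinv k q))) ∧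
    (∀ x : Dq k q,
      (DK k q * DKtinv k q) * x = x * (DK k q * DKtinv k q)) :=
  casimir_central_general k q hq0
end
end

section
/- Assume k is algebraically closed, d > 1 and q² is a primitive d-th root of unity. Let ρ : D_q → End_k(V) be a finite-dimensional simple representation such that ρ(K) and ρ(K̃) are diagonalizable and ρ(E)^d = 0 = ρ(F)^d. Then V is isomorphic as a D_q-module either to Z(w,λ) for some w, λ ∈ k^× with λ^{2d} ≠ 1, or to L(w,n) for some w ∈ k^× and some integer 0 ≤ n < d. -/
noncomputable section

/-- Action of `K` on `L(w,n)`: `K·m_i = wq^{n−2i}·m_i`. -/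
def lK (k : Type) [Field k] (q w : k) (n : ℕ) :
    (Fin (n + 1) →₀ k) →ₗ[k] (Fin (n + 1) →₀ k) :=
  Finsupp.lift (Fin (n + 1) →₀ k) k (Fin (n + 1)) fun i =>
    (w * q ^ ((n : ℤ) - 2 * ((i : ℕ) : ℤ))) • Finsupp.single i 1

/-- Action of `K⁻¹` on `L(w,n)` (the inverse operator of `lK`). -/
def lKinv (k : Type) [Field k] (q w : k) (n : ℕ) :
    (Fin (n + 1) →₀ k) →ₗ[k] (Fin (n + 1) →₀ k) :=
  Finsupp.lift (Fin (n + 1) →₀ k) k (Fin (n + 1)) fun i =>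
    ((w * q ^ ((n : ℤ) - 2 * ((i : ℕ) : ℤ)))⁻¹) • Finsupp.single i 1

/-- Action of `K̃` on `L(w,n)`: `K̃·m_i = w⁻¹q^{n−2i}·m_i`. -/
def lKt (k : Type) [Field k] (q w : k) (n : ℕ) :
    (Fin (n + 1) →₀ k) →ₗ[k] (Fin (n + 1) →₀ k) :=
  Finsupp.lift (Fin (n + 1) →₀ k) k (Fin (n + 1)) fun i =>
    (w⁻¹ * q ^ ((n : ℤ) - 2 * ((i : ℕ) : ℤ))) • Finsupp.single i 1

/-- Action of `K̃⁻¹` on `L(w,n)` (the inverse operator of `lKt`). -/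
def lKtinv (k : Type) [Field k] (q w : k) (n : ℕ) :
    (Fin (n + 1) →₀ k) →ₗ[k] (Fin (n + 1) →₀ k) :=
  Finsupp.lift (Fin (n + 1) →₀ k) k (Fin (n + 1)) fun i =>
    ((w⁻¹ * q ^ ((n : ℤ) - 2 * ((i : ℕ) : ℤ)))⁻¹) • Finsupp.single i 1

/-- Action of `F` on `L(w,n)`: `F·m_i = m_{i+1}` with `m_{n+1} := 0`. -/
def lF (k : Type) [Field k] (n : ℕ) :
    (Fin (n + 1) →₀ k) →ₗ[k] (Fin (n + 1) →₀ k) :=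
  Finsupp.lift (Fin (n + 1) →₀ k) k (Fin (n + 1)) fun i =>
    if h : (i : ℕ) + 1 < n + 1 then Finsupp.single (⟨(i : ℕ) + 1, h⟩ : Fin (n + 1)) 1 else 0

/-- Action of `E` on `L(w,n)`: `E·m_0 = 0`, `E·m_i = w·[i]_q·[n+1−i]_q·m_{i−1}`. -/
def lE (k : Type) [Field k] (q w : k) (n : ℕ) :
    (Fin (n + 1) →₀ k) →ₗ[k] (Fin (n + 1) →₀ k) :=
  Finsupp.lift (Fin (n + 1) →₀ k) k (Fin (n + 1)) fun i =>
    if (i : ℕ) = 0 then 0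
    else
      (w * qint k q (i : ℕ) * qint k q (n + 1 - (i : ℕ))) •
        Finsupp.single
          (⟨(i : ℕ) - 1, Nat.lt_of_le_of_lt (Nat.sub_le _ _) i.isLt⟩ : Fin (n + 1)) 1

/-- `ρ` realizes the simple module `L(w,n)` on `Fin (n+1) →₀ k`. -/
def LCond (k : Type) [Field k] (q w : k) (n : ℕ)
    (ρ : Dq k q →ₐ[k] Module.End k (Fin (n + 1) →₀ k)) : Prop :=
  ρ (DE k q) = lE k q w n ∧ ρ (DF k q) = lF k n ∧
  ρ (DK k q) = lK k q w n ∧ ρ (DKinv k q) = lKinv k q w n ∧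
  ρ (DKt k q) = lKt k q w n ∧ ρ (DKtinv k q) = lKtinv k q w n

/-- Action of `K` on `Z(w,λ)`: `K·m_i = wλq^{−2i}·m_i` (`d`-dimensional space). -/
def zK (k : Type) [Field k] (q w lam : k) (d : ℕ) : (Fin d →₀ k) →ₗ[k] (Fin d →₀ k) :=
  Finsupp.lift (Fin d →₀ k) k (Fin d) fun i =>
    (w * lam * q ^ (-(2 * ((i : ℕ) : ℤ)))) • Finsupp.single i 1

/-- Action of `K⁻¹` on `Z(w,λ)`. -/
def zKinv (k : Type) [Field k] (q w lam : k) (d : ℕ) : (Fin d →₀ k) →ₗ[k] (Fin d →₀ k) :=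
  Finsupp.lift (Fin d →₀ k) k (Fin d) fun i =>
    ((w * lam * q ^ (-(2 * ((i : ℕ) : ℤ))))⁻¹) • Finsupp.single i 1

/-- Action of `K̃` on `Z(w,λ)`: `K̃·m_i = w⁻¹λq^{−2i}·m_i`. -/
def zKt (k : Type) [Field k] (q w lam : k) (d : ℕ) : (Fin d →₀ k) →ₗ[k] (Fin d →₀ k) :=
  Finsupp.lift (Fin d →₀ k) k (Fin d) fun i =>
    (w⁻¹ * lam * q ^ (-(2 * ((i : ℕ) : ℤ)))) • Finsupp.single i 1

/-- Action of `K̃⁻¹` on `Z(w,λ)`. -/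
def zKtinv (k : Type) [Field k] (q w lam : k) (d : ℕ) : (Fin d →₀ k) →ₗ[k] (Fin d →₀ k) :=
  Finsupp.lift (Fin d →₀ k) k (Fin d) fun i =>
    ((w⁻¹ * lam * q ^ (-(2 * ((i : ℕ) : ℤ))))⁻¹) • Finsupp.single i 1

/-- Action of `F` on `Z(w,λ)`: `F·m_i = m_{i+1}` with `m_d := 0`. -/
def zF (k : Type) [Field k] (d : ℕ) : (Fin d →₀ k) →ₗ[k] (Fin d →₀ k) :=
  Finsupp.lift (Fin d →₀ k) k (Fin d) fun i =>
    if h : (i : ℕ) + 1 < d then Finsupp.single (⟨(i : ℕ) + 1, h⟩ : Fin d) 1 else 0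

/-- Action of `E` on `Z(w,λ)`: `E·m_0 = 0`,
`E·m_i = [i]_q·w·(λq^{1−i} − λ⁻¹q^{i−1})/(q − q⁻¹)·m_{i−1}`. -/
def zE (k : Type) [Field k] (q w lam : k) (d : ℕ) : (Fin d →₀ k) →ₗ[k] (Fin d →₀ k) :=
  Finsupp.lift (Fin d →₀ k) k (Fin d) fun i =>
    if (i : ℕ) = 0 then 0
    else
      (qint k q (i : ℕ) * w *
          (lam * q ^ (1 - ((i : ℕ) : ℤ)) - lam⁻¹ * q ^ (((i : ℕ) : ℤ) - 1)) / (q - q⁻¹)) •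
        Finsupp.single
          (⟨(i : ℕ) - 1, Nat.lt_of_le_of_lt (Nat.sub_le _ _) i.isLt⟩ : Fin d) 1

/-- `ρ` realizes the `d`-dimensional module `Z(w,λ)` on `Fin d →₀ k`. -/
def ZCond (k : Type) [Field k] (q w lam : k) (d : ℕ)
    (ρ : Dq k q →ₐ[k] Module.End k (Fin d →₀ k)) : Prop :=
  ρ (DE k q) = zE k q w lam d ∧ ρ (DF k q) = zF k d ∧
  ρ (DK k q) = zK k q w lam d ∧ ρ (DKinv k q) = zKinv k q w lam d ∧
  ρ (DKt k q) = zKt k q w lam d ∧ ρ (DKtinv k q) = zKtinv k q w lam d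

/-!
Since `K` and `K̃` commute they have a common eigenvector, and pushing it up with the
nilpotent `E` as far as possible gives a highest weight vector `v` of weight `(μ, ν)`.
The vectors `mᵢ = Fⁱ v` with `i < t`, where `t ≤ d` is the first index with `m_t = 0`, have
the pairwise distinct `K`-weights `μ q⁻²ⁱ`, so they are linearly independent. The relation
for `EF - FE` gives `E mᵢ = cᵢ m_{i-1}` with
`cᵢ = raisingCoeff q μ ν i = [i]_q (q^{1-i} μ - q^{i-1} ν⁻¹)/(q - q⁻¹)`, so their span is a
submodule and hence all of `V`. If `c_s = 0` for some `0 < s < t`, the `mᵢ` with `i ≥ s`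
would span a proper submodule; so `c_s ≠ 0` there, whereas `c_t = 0`. For `0 < s < d`,
`c_s = 0` exactly when `μν = q^{2(s-1)}`. Hence either `t = d` and `(μν)^d ≠ 1`, and
`V ≅ Z(μ/λ, λ)` for `λ² = μν`, or `μν = q^{2(t-1)}` and `V ≅ L(μ q^{1-t}, t - 1)`.
-/

open Module

section Relations

variable {k : Type} [Field k] (q : k)

theorem DK_mul_DE : DK k q * DE k q = q ^ 2 • (DE k q * DK k q) := by
  rw [DK, DE, ← map_mul, RingQuot.mkAlgHom_rel k DRel.KE, map_smul, map_mul]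

theorem DK_mul_DF : DK k q * DF k q = (q ^ 2)⁻¹ • (DF k q * DK k q) := by
  rw [DK, DF, ← map_mul, RingQuot.mkAlgHom_rel k DRel.KF, map_smul, map_mul]

theorem DKt_mul_DE : DKt k q * DE k q = q ^ 2 • (DE k q * DKt k q) := by
  rw [DKt, DE, ← map_mul, RingQuot.mkAlgHom_rel k DRel.KtE, map_smul, map_mul]

theorem DKt_mul_DF : DKt k q * DF k q = (q ^ 2)⁻¹ • (DF k q * DKt k q) := by
  rw [DKt, DF, ← map_mul, RingQuot.mkAlgHom_rel k DRel.KtF, map_smul, map_mul]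

theorem DKinv_mul_DK : DKinv k q * DK k q = 1 := by
  rw [DK, DKinv, ← map_mul, RingQuot.mkAlgHom_rel k DRel.KinvK, map_one]

theorem DKtinv_mul_DKt : DKtinv k q * DKt k q = 1 := by
  rw [DKt, DKtinv, ← map_mul, RingQuot.mkAlgHom_rel k DRel.KtinvKt, map_one]

theorem commute_DK_DKt : Commute (DK k q) (DKt k q) := by
  rw [Commute, SemiconjBy, DK, DKt, ← map_mul, RingQuot.mkAlgHom_rel k DRel.KKt, map_mul]

theorem DE_mul_DF : DE k q * DF k q = DF k q * DE k q + (q - q⁻¹)⁻¹ • (DK k q - DKtinv k q) := by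
  rw [DE, DF, ← map_mul, RingQuot.mkAlgHom_rel k DRel.EF, map_add, map_mul, map_smul, map_sub]
  rfl

variable {q} {V : Type} [AddCommGroup V] [Module k V]

theorem forall_apply_mem_of_generators (ρ : Dq k q →ₐ[k] Module.End k V) (W : Submodule k V)
    (hE : ∀ u ∈ W, ρ (DE k q) u ∈ W) (hF : ∀ u ∈ W, ρ (DF k q) u ∈ W)
    (hK : ∀ u ∈ W, ρ (DK k q) u ∈ W) (hKinv : ∀ u ∈ W, ρ (DKinv k q) u ∈ W)
    (hKt : ∀ u ∈ W, ρ (DKt k q) u ∈ W) (hKtinv : ∀ u ∈ W, ρ (DKtinv k q) u ∈ W) :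
    ∀ x : Dq k q, ∀ u ∈ W, ρ x u ∈ W := by
  intro x
  obtain ⟨y, rfl⟩ := RingQuot.mkAlgHom_surjective k (DRel k q) x
  induction y using FreeAlgebra.induction with
  | grade0 r =>
    intro u hu
    rw [AlgHom.commutes, AlgHom.commutes, Module.algebraMap_end_apply]
    exact W.smul_mem r hu
  | grade1 g => cases g <;> assumption
  | mul a b ha hb =>
    intro u hu
    rw [map_mul, map_mul, Module.End.mul_apply]
    exact ha _ (hb _ hu)
  | add a b ha hb =>
    intro u hu
    rw [map_add, map_add, LinearMap.add_apply]
    exact W.add_mem (ha u hu) (hb u hu)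

end Relations

section Endomorphisms

variable {k : Type} [Field k] {V : Type} [AddCommGroup V] [Module k V]

theorem Module.End.apply_eq_inv_smul_of_mul_eq_one {A B : Module.End k V} (hBA : B * A = 1)
    {x : V} {a : k} (h : A x = a • x) : B x = a⁻¹ • x := by
  have hx : x = a • B x := by
    rw [← map_smul, ← h, ← Module.End.mul_apply, hBA, Module.End.one_apply]
  rcases eq_or_ne a 0 with rfl | ha
  · rw [zero_smul] at hx
    rw [hx, map_zero, smul_zero]
  · rw [hx, smul_smul, inv_mul_cancel₀ ha, one_smul, ← hx]

theorem Module.End.apply_pow_apply_of_mul_eq_smul_mul {A B : Module.End k V} {c a : k}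
    (hAB : A * B = c • (B * A)) {x : V} (h : A x = a • x) (i : ℕ) :
    A ((B ^ i) x) = (c ^ i * a) • (B ^ i) x := by
  induction i with
  | zero => simpa using h
  | succ i ih =>
    rw [pow_succ', Module.End.mul_apply, ← Module.End.mul_apply A, hAB, LinearMap.smul_apply,
      Module.End.mul_apply, ih, map_smul, smul_smul, pow_succ]
    ring_nf

theorem Module.End.exists_minimal_pow_apply_eq_zero {A : Module.End k V} {n : ℕ}
    (hA : A ^ n = 0) (x : V) : ∃ t ≤ n, (A ^ t) x = 0 ∧ ∀ i < t, (A ^ i) x ≠ 0 := by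
  classical
  have hex : ∃ t, (A ^ t) x = 0 := ⟨n, by rw [hA, LinearMap.zero_apply]⟩
  exact ⟨Nat.find hex, Nat.find_le (by rw [hA, LinearMap.zero_apply]), Nat.find_spec hex,
    fun i hi => Nat.find_min hex hi⟩

theorem Module.End.exists_common_eigenvector [IsAlgClosed k] [FiniteDimensional k V]
    [Nontrivial V] {A B : Module.End k V} (hAB : Commute A B) :
    ∃ x : V, x ≠ 0 ∧ ∃ a b : k, A x = a • x ∧ B x = b • x := by
  obtain ⟨a, ha⟩ := Module.End.exists_eigenvalue A
  have hB : ∀ x ∈ A.eigenspace a, B x ∈ A.eigenspace a :=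
    fun x hx => Module.End.mapsTo_genEigenspace_of_comm hAB a 1 hx
  have : Nontrivial (A.eigenspace a) := Submodule.nontrivial_iff_ne_bot.mpr ha
  obtain ⟨b, hb⟩ := Module.End.exists_eigenvalue (B.restrict hB)
  obtain ⟨x, hxb, hx0⟩ := hb.exists_hasEigenvector
  refine ⟨x, fun h => hx0 (Subtype.ext h), a, b, Module.End.mem_eigenspace_iff.mp x.2, ?_⟩
  simpa [LinearMap.restrict_apply] using congrArg Subtype.val (Module.End.mem_eigenspace_iff.mp hxb)

theorem Module.Basis.conjAlgEquiv_repr_eq_lift {ι : Type} (b : Basis ι k V)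
    {f : Module.End k V} {φ : ι → ι →₀ k}
    (h : ∀ i, f (b i) = b.repr.symm (φ i)) :
    b.repr.conjAlgEquiv k f = Finsupp.lift (ι →₀ k) k ι φ := by
  refine Finsupp.basisSingleOne.ext fun i => ?_
  rw [Finsupp.coe_basisSingleOne, LinearEquiv.conjAlgEquiv_apply, LinearMap.comp_apply,
    LinearMap.comp_apply, LinearEquiv.coe_coe, LinearEquiv.coe_coe, b.repr_symm_single_one, h,
    LinearEquiv.apply_symm_apply, Finsupp.lift_apply, Finsupp.sum_single_index (by simp),
    one_smul]

end Endomorphisms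

section QNumbers

variable {k : Type} [Field k] {q : k}

theorem sub_inv_ne_zero_of_sq_ne_one (hq0 : q ≠ 0) (hq2 : q ^ 2 ≠ 1) : q - q⁻¹ ≠ 0 := by
  rw [sub_ne_zero]
  intro h
  apply hq2
  rw [sq]
  nth_rewrite 2 [h]
  exact mul_inv_cancel₀ hq0

theorem qint_ne_zero (hq0 : q ≠ 0) {d i : ℕ} (hq : IsPrimitiveRoot (q ^ 2) d) (h0 : 0 < i)
    (hi : i < d) : qint k q i ≠ 0 := by
  refine div_ne_zero (sub_ne_zero.mpr fun h => ?_)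
    (sub_inv_ne_zero_of_sq_ne_one hq0 (hq.ne_one (by omega)))
  apply hq.pow_ne_one_of_pos_of_lt h0.ne' hi
  rw [sq, mul_pow]
  nth_rewrite 2 [h]
  rw [← mul_pow, mul_inv_cancel₀ hq0, one_pow]

theorem inv_sq_pow (q : k) (i : ℕ) : (q ^ 2)⁻¹ ^ i = q ^ (-(2 * (i : ℤ))) := by
  rw [zpow_neg, inv_pow, ← pow_mul]
  norm_cast

def raisingCoeff (q μ ν : k) (i : ℕ) : k :=
  qint k q i * (q ^ (1 - (i : ℤ)) * μ - q ^ ((i : ℤ) - 1) * ν⁻¹) / (q - q⁻¹)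

variable {μ ν : k}

theorem raisingCoeff_eq (hq0 : q ≠ 0) (i : ℕ) :
    raisingCoeff q μ ν i =
      (q ^ i - (q ^ i)⁻¹) * (q * (q ^ i)⁻¹ * μ - q ^ i * q⁻¹ * ν⁻¹) / (q - q⁻¹) / (q - q⁻¹) := by
  rw [raisingCoeff, qint, zpow_sub₀ hq0, zpow_sub₀ hq0, zpow_natCast, zpow_one, inv_pow]
  ring

theorem raisingCoeff_zero : raisingCoeff q μ ν 0 = 0 := by
  simp [raisingCoeff, qint]

theorem raisingCoeff_succ (hq0 : q ≠ 0) (i : ℕ) :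
    raisingCoeff q μ ν (i + 1) = raisingCoeff q μ ν i +
      (q - q⁻¹)⁻¹ * (μ * q ^ (-(2 * (i : ℤ))) - (ν * q ^ (-(2 * (i : ℤ))))⁻¹) := by
  rcases eq_or_ne (q - q⁻¹) 0 with hqq | hqq
  · simp [raisingCoeff, hqq]
  rw [raisingCoeff_eq hq0, raisingCoeff_eq hq0, ← inv_sq_pow, inv_pow, ← pow_mul, mul_comm 2 i,
    pow_mul, pow_succ]
  have hqi : q ^ i ≠ 0 := pow_ne_zero i hq0
  generalize q ^ i = y at hqi ⊢
  field_simp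
  ring

theorem raisingCoeff_eq_zero_of_mul_eq (hq0 : q ≠ 0) (hν : ν ≠ 0) {j : ℕ}
    (h : μ * ν = (q ^ 2) ^ j) : raisingCoeff q μ ν (j + 1) = 0 := by
  have hμ : μ = (q ^ j) ^ 2 * ν⁻¹ := by
    rw [← pow_mul, mul_comm j, pow_mul, ← h, mul_inv_cancel_right₀ hν]
  rw [raisingCoeff_eq hq0, hμ, pow_succ]
  have hqj : q ^ j ≠ 0 := pow_ne_zero j hq0
  generalize q ^ j = y at hqj ⊢
  field_simp
  ring

theorem mul_eq_of_raisingCoeff_eq_zero (hq0 : q ≠ 0) (hν : ν ≠ 0) {d s : ℕ}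
    (hq : IsPrimitiveRoot (q ^ 2) d) (h0 : 0 < s) (hs : s < d) (h : raisingCoeff q μ ν s = 0) :
    μ * ν = (q ^ 2) ^ (s - 1) := by
  obtain ⟨j, rfl⟩ : ∃ j, s = j + 1 := ⟨s - 1, by omega⟩
  have hqq := sub_inv_ne_zero_of_sq_ne_one hq0 (hq.ne_one (by omega))
  rw [raisingCoeff, div_eq_zero_iff, mul_eq_zero, or_iff_left hqq,
    or_iff_right (qint_ne_zero hq0 hq h0 hs)] at h
  rw [zpow_sub₀ hq0, zpow_sub₀ hq0, zpow_natCast, zpow_one, pow_succ] at h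
  rw [Nat.add_sub_cancel, ← pow_mul, mul_comm 2 j, pow_mul]
  have hqj : q ^ j ≠ 0 := pow_ne_zero j hq0
  generalize q ^ j = y at hqj h ⊢
  field_simp at h
  linear_combination h

theorem raisingCoeff_first_zero_cases (hq0 : q ≠ 0) (hν : ν ≠ 0) {d t : ℕ}
    (hq : IsPrimitiveRoot (q ^ 2) d) (ht0 : 0 < t) (htd : t ≤ d) (ht : raisingCoeff q μ ν t = 0)
    (hs : ∀ s, 0 < s → s < t → raisingCoeff q μ ν s ≠ 0) :
    (t = d ∧ (μ * ν) ^ d ≠ 1) ∨ μ * ν = (q ^ 2) ^ (t - 1) := by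
  rcases htd.lt_or_eq with htd | rfl
  · exact Or.inr (mul_eq_of_raisingCoeff_eq_zero hq0 hν hq ht0 htd ht)
  by_cases h1 : (μ * ν) ^ t = 1
  · have : NeZero t := ⟨ht0.ne'⟩
    obtain ⟨j, hjt, hμν⟩ := hq.eq_pow_of_pow_eq_one h1
    obtain rfl : j = t - 1 := by
      by_contra hj
      exact hs (j + 1) j.succ_pos (by omega) (raisingCoeff_eq_zero_of_mul_eq hq0 hν hμν.symm)
    exact Or.inr hμν.symm
  · exact Or.inl ⟨rfl, h1⟩

theorem raisingCoeff_zE (w lam : k) (i : ℕ) :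
    raisingCoeff q (w * lam) (w⁻¹ * lam) i =
      qint k q i * w * (lam * q ^ (1 - (i : ℤ)) - lam⁻¹ * q ^ ((i : ℤ) - 1)) / (q - q⁻¹) := by
  rw [raisingCoeff, mul_inv, inv_inv]
  ring

theorem raisingCoeff_lE (hq0 : q ≠ 0) (w : k) {n i : ℕ} (hi : i ≤ n + 1) :
    raisingCoeff q (w * q ^ n) (w⁻¹ * q ^ n) i = w * qint k q i * qint k q (n + 1 - i) := by
  rw [raisingCoeff_eq hq0, qint, qint, inv_pow, inv_pow, pow_sub₀ q hq0 hi, pow_succ]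
  have hqi : q ^ i ≠ 0 := pow_ne_zero i hq0
  have hqn : q ^ n ≠ 0 := pow_ne_zero n hq0
  generalize q ^ i = y at hqi ⊢
  generalize q ^ n = z at hqn ⊢
  field_simp

theorem mul_zpow_neg_two_mul (hq0 : q ≠ 0) (w : k) (n i : ℕ) :
    w * q ^ n * q ^ (-(2 * (i : ℤ))) = w * q ^ ((n : ℤ) - 2 * (i : ℤ)) := by
  rw [mul_assoc, ← zpow_natCast, ← zpow_add₀ hq0, sub_eq_add_neg]

end QNumbers

section HighestWeight

variable {k : Type} [Field k] {q : k} {V : Type} [AddCommGroup V] [Module k V]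
  (ρ : Dq k q →ₐ[k] Module.End k V)

structure IsHighestWeightVector (μ ν : k) (v : V) : Prop where
  ne_zero : v ≠ 0
  DE_apply : ρ (DE k q) v = 0
  DK_apply : ρ (DK k q) v = μ • v
  DKt_apply : ρ (DKt k q) v = ν • v

theorem exists_isHighestWeightVector [IsAlgClosed k] [FiniteDimensional k V] [Nontrivial V]
    {d : ℕ} (hEd : ρ (DE k q) ^ d = 0) : ∃ (μ ν : k) (v : V), IsHighestWeightVector ρ μ ν v := by
  obtain ⟨x, hx0, a, b, hKx, hKtx⟩ :=
    Module.End.exists_common_eigenvector ((commute_DK_DKt q).map ρ)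
  obtain ⟨t, -, hEt, hEmin⟩ := Module.End.exists_minimal_pow_apply_eq_zero hEd x
  have ht0 : t ≠ 0 := by
    rintro rfl
    exact hx0 (by simpa using hEt)
  refine ⟨(q ^ 2) ^ (t - 1) * a, (q ^ 2) ^ (t - 1) * b, (ρ (DE k q) ^ (t - 1)) x,
    ⟨hEmin _ (by omega), ?_, ?_, ?_⟩⟩
  · rw [← Module.End.mul_apply, ← pow_succ', Nat.sub_add_cancel (Nat.pos_of_ne_zero ht0), hEt]
  · exact Module.End.apply_pow_apply_of_mul_eq_smul_mul
      (by simpa using congrArg ρ (DK_mul_DE q)) hKx _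
  · exact Module.End.apply_pow_apply_of_mul_eq_smul_mul
      (by simpa using congrArg ρ (DKt_mul_DE q)) hKtx _

namespace IsHighestWeightVector

variable {ρ} {μ ν : k} {v : V}

theorem DK_weight_ne_zero (hv : IsHighestWeightVector ρ μ ν v) : μ ≠ 0 := by
  rintro rfl
  apply hv.ne_zero
  calc v = (ρ (DKinv k q) * ρ (DK k q)) v := by
        rw [← map_mul, DKinv_mul_DK, map_one, Module.End.one_apply]
    _ = 0 := by rw [Module.End.mul_apply, hv.DK_apply, zero_smul, map_zero]

theorem DKt_weight_ne_zero (hv : IsHighestWeightVector ρ μ ν v) : ν ≠ 0 := by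
  rintro rfl
  apply hv.ne_zero
  calc v = (ρ (DKtinv k q) * ρ (DKt k q)) v := by
        rw [← map_mul, DKtinv_mul_DKt, map_one, Module.End.one_apply]
    _ = 0 := by rw [Module.End.mul_apply, hv.DKt_apply, zero_smul, map_zero]

theorem DK_apply_DF_pow (hv : IsHighestWeightVector ρ μ ν v) (i : ℕ) :
    ρ (DK k q) ((ρ (DF k q) ^ i) v) = (μ * q ^ (-(2 * (i : ℤ)))) • (ρ (DF k q) ^ i) v := by
  rw [Module.End.apply_pow_apply_of_mul_eq_smul_mul (by simpa using congrArg ρ (DK_mul_DF q))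
    hv.DK_apply, inv_sq_pow, mul_comm]

theorem DKt_apply_DF_pow (hv : IsHighestWeightVector ρ μ ν v) (i : ℕ) :
    ρ (DKt k q) ((ρ (DF k q) ^ i) v) = (ν * q ^ (-(2 * (i : ℤ)))) • (ρ (DF k q) ^ i) v := by
  rw [Module.End.apply_pow_apply_of_mul_eq_smul_mul (by simpa using congrArg ρ (DKt_mul_DF q))
    hv.DKt_apply, inv_sq_pow, mul_comm]

theorem DKinv_apply_DF_pow (hv : IsHighestWeightVector ρ μ ν v) (i : ℕ) :
    ρ (DKinv k q) ((ρ (DF k q) ^ i) v) = (μ * q ^ (-(2 * (i : ℤ))))⁻¹ • (ρ (DF k q) ^ i) v :=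
  Module.End.apply_eq_inv_smul_of_mul_eq_one (by simpa using congrArg ρ (DKinv_mul_DK q))
    (hv.DK_apply_DF_pow i)

theorem DKtinv_apply_DF_pow (hv : IsHighestWeightVector ρ μ ν v) (i : ℕ) :
    ρ (DKtinv k q) ((ρ (DF k q) ^ i) v) = (ν * q ^ (-(2 * (i : ℤ))))⁻¹ • (ρ (DF k q) ^ i) v :=
  Module.End.apply_eq_inv_smul_of_mul_eq_one (by simpa using congrArg ρ (DKtinv_mul_DKt q))
    (hv.DKt_apply_DF_pow i)

theorem DE_apply_DF_pow (hv : IsHighestWeightVector ρ μ ν v) (hq0 : q ≠ 0) (i : ℕ) :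
    ρ (DE k q) ((ρ (DF k q) ^ i) v) = raisingCoeff q μ ν i • (ρ (DF k q) ^ (i - 1)) v := by
  induction i with
  | zero => simp [raisingCoeff_zero, hv.DE_apply]
  | succ i ih =>
    have hF : raisingCoeff q μ ν i • ρ (DF k q) ((ρ (DF k q) ^ (i - 1)) v) =
        raisingCoeff q μ ν i • (ρ (DF k q) ^ i) v := by
      rcases i with _ | i
      · simp [raisingCoeff_zero]
      · rw [← Module.End.mul_apply, ← pow_succ', Nat.add_sub_cancel]
    have hEF : ρ (DE k q) * ρ (DF k q) = ρ (DF k q) * ρ (DE k q) +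
        (q - q⁻¹)⁻¹ • (ρ (DK k q) - ρ (DKtinv k q)) := by
      simpa using congrArg ρ (DE_mul_DF q)
    rw [pow_succ', Module.End.mul_apply, ← Module.End.mul_apply, hEF, LinearMap.add_apply,
      Module.End.mul_apply, ih, map_smul, hF, LinearMap.smul_apply, LinearMap.sub_apply,
      hv.DK_apply_DF_pow, hv.DKtinv_apply_DF_pow, raisingCoeff_succ hq0, Nat.add_sub_cancel]
    module

theorem raisingCoeff_eq_zero (hv : IsHighestWeightVector ρ μ ν v) (hq0 : q ≠ 0) {t : ℕ}
    (hmt : (ρ (DF k q) ^ t) v = 0) (hm : (ρ (DF k q) ^ (t - 1)) v ≠ 0) :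
    raisingCoeff q μ ν t = 0 := by
  have h := hv.DE_apply_DF_pow hq0 t
  rw [hmt, map_zero, eq_comm, smul_eq_zero] at h
  exact h.resolve_right hm

theorem linearIndependent (hv : IsHighestWeightVector ρ μ ν v) {d t : ℕ}
    (hq : IsPrimitiveRoot (q ^ 2) d) (htd : t ≤ d) (hm : ∀ i < t, (ρ (DF k q) ^ i) v ≠ 0) :
    LinearIndependent k fun i : Fin t => (ρ (DF k q) ^ (i : ℕ)) v := by
  refine Module.End.eigenvectors_linearIndependent' (ρ (DK k q))
    (fun i : Fin t => μ * q ^ (-(2 * ((i : ℕ) : ℤ)))) (fun i j hij => ?_) _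
    fun i => ⟨Module.End.mem_eigenspace_iff.mpr (hv.DK_apply_DF_pow i), hm i i.isLt⟩
  have h := mul_left_cancel₀ hv.DK_weight_ne_zero hij
  rw [← inv_sq_pow, ← inv_sq_pow, inv_pow, inv_pow, inv_inj] at h
  exact Fin.ext (hq.pow_inj (by omega) (by omega) h)

theorem apply_mem_span_DF_pow (hv : IsHighestWeightVector ρ μ ν v) (hq0 : q ≠ 0) {s t : ℕ}
    (hs : raisingCoeff q μ ν s = 0) (hmt : (ρ (DF k q) ^ t) v = 0) (x : Dq k q) :
    ∀ u ∈ Submodule.span k ((fun i : Fin t => (ρ (DF k q) ^ (i : ℕ)) v) '' {i | s ≤ (i : ℕ)}),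
      ρ x u ∈
        Submodule.span k ((fun i : Fin t => (ρ (DF k q) ^ (i : ℕ)) v) '' {i | s ≤ (i : ℕ)}) := by
  set W := Submodule.span k ((fun i : Fin t => (ρ (DF k q) ^ (i : ℕ)) v) '' {i | s ≤ (i : ℕ)})
  have hmem : ∀ i, s ≤ i → i < t → (ρ (DF k q) ^ i) v ∈ W :=
    fun i hsi hit => Submodule.subset_span ⟨⟨i, hit⟩, hsi, rfl⟩
  have hgen : ∀ f : Module.End k V, (∀ i, s ≤ i → i < t → f ((ρ (DF k q) ^ i) v) ∈ W) →
      ∀ u ∈ W, f u ∈ W := by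
    intro f hf u hu
    refine (Submodule.span_le (p := W.comap f)).mpr ?_ hu
    rintro _ ⟨i, hsi, rfl⟩
    exact hf i hsi i.isLt
  refine forall_apply_mem_of_generators ρ W (hgen _ fun i hsi hit => ?_)
    (hgen _ fun i hsi hit => ?_) (hgen _ fun i hsi hit => ?_) (hgen _ fun i hsi hit => ?_)
    (hgen _ fun i hsi hit => ?_) (hgen _ fun i hsi hit => ?_) x
  · rw [hv.DE_apply_DF_pow hq0]
    rcases hsi.eq_or_lt with rfl | hsi
    · rw [hs, zero_smul]
      exact W.zero_mem
    · exact W.smul_mem _ (hmem _ (by omega) (by omega))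
  · rw [← Module.End.mul_apply, ← pow_succ']
    rcases (Nat.succ_le_of_lt hit).eq_or_lt with hit | hit
    · rw [← Nat.succ_eq_add_one, hit, hmt]
      exact W.zero_mem
    · exact hmem _ (by omega) hit
  · rw [hv.DK_apply_DF_pow]
    exact W.smul_mem _ (hmem i hsi hit)
  · rw [hv.DKinv_apply_DF_pow]
    exact W.smul_mem _ (hmem i hsi hit)
  · rw [hv.DKt_apply_DF_pow]
    exact W.smul_mem _ (hmem i hsi hit)
  · rw [hv.DKtinv_apply_DF_pow]
    exact W.smul_mem _ (hmem i hsi hit)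

theorem span_DF_pow_eq_top (hv : IsHighestWeightVector ρ μ ν v) (hq0 : q ≠ 0)
    (hsimple : ∀ W : Submodule k V, (∀ (x : Dq k q), ∀ v ∈ W, ρ x v ∈ W) → W = ⊥ ∨ W = ⊤)
    {t : ℕ} (hmt : (ρ (DF k q) ^ t) v = 0) :
    Submodule.span k (Set.range fun i : Fin t => (ρ (DF k q) ^ (i : ℕ)) v) = ⊤ := by
  have ht0 : 0 < t := Nat.pos_of_ne_zero (by rintro rfl; exact hv.ne_zero (by simpa using hmt))
  have hinv := hv.apply_mem_span_DF_pow hq0 raisingCoeff_zero hmt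
  simp only [zero_le, Set.ofPred_true, Set.image_univ] at hinv
  refine (hsimple _ hinv).resolve_left fun hbot => hv.ne_zero ?_
  have hv_mem : (ρ (DF k q) ^ ((⟨0, ht0⟩ : Fin t) : ℕ)) v ∈ (⊥ : Submodule k V) :=
    hbot ▸ Submodule.subset_span (Set.mem_range_self _)
  simpa using hv_mem

theorem raisingCoeff_ne_zero (hv : IsHighestWeightVector ρ μ ν v) (hq0 : q ≠ 0)
    (hsimple : ∀ W : Submodule k V, (∀ (x : Dq k q), ∀ v ∈ W, ρ x v ∈ W) → W = ⊥ ∨ W = ⊤)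
    {t : ℕ} (hmt : (ρ (DF k q) ^ t) v = 0)
    (hli : LinearIndependent k fun i : Fin t => (ρ (DF k q) ^ (i : ℕ)) v) {s : ℕ} (h0 : 0 < s)
    (hst : s < t) : raisingCoeff q μ ν s ≠ 0 := by
  intro hs
  rcases hsimple _ (hv.apply_mem_span_DF_pow hq0 hs hmt) with hbot | htop
  · refine hli.ne_zero ⟨s, hst⟩ ?_
    rw [← Submodule.mem_bot k, ← hbot]
    exact Submodule.subset_span ⟨⟨s, hst⟩, le_refl s, rfl⟩
  · refine hli.notMem_span_image (x := ⟨0, by omega⟩) (s := {i | s ≤ (i : ℕ)}) (by simp [h0.ne']) ?_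
    rw [htop]
    exact Submodule.mem_top

/- The coefficients are parameters so that `zCond` and `lCond` can supply the literal formulas
of `zE`, `zK`, … and `lE`, `lK`, …, which then match the conclusion definitionally. -/
theorem conjAlgEquiv_repr_eq_string (hv : IsHighestWeightVector ρ μ ν v) (hq0 : q ≠ 0) {t : ℕ}
    (b : Basis (Fin t) k V) (hb : ∀ i, b i = (ρ (DF k q) ^ (i : ℕ)) v)
    (hmt : (ρ (DF k q) ^ t) v = 0) (c a a' : ℕ → k)
    (hc : ∀ i, 0 < i → i < t → c i = raisingCoeff q μ ν i)
    (ha : ∀ i, a i = μ * q ^ (-(2 * (i : ℤ)))) (ha' : ∀ i, a' i = ν * q ^ (-(2 * (i : ℤ)))) :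
    (b.repr.conjAlgEquiv k).toAlgHom.comp ρ (DE k q) = Finsupp.lift (Fin t →₀ k) k (Fin t) (fun i =>
      if (i : ℕ) = 0 then 0
      else c i • Finsupp.single
        (⟨(i : ℕ) - 1, Nat.lt_of_le_of_lt (Nat.sub_le _ _) i.isLt⟩ : Fin t) 1) ∧
    (b.repr.conjAlgEquiv k).toAlgHom.comp ρ (DF k q) = zF k t ∧
    (b.repr.conjAlgEquiv k).toAlgHom.comp ρ (DK k q) =
      Finsupp.lift (Fin t →₀ k) k (Fin t) (fun i => a i • Finsupp.single i 1) ∧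
    (b.repr.conjAlgEquiv k).toAlgHom.comp ρ (DKinv k q) =
      Finsupp.lift (Fin t →₀ k) k (Fin t) (fun i => (a i)⁻¹ • Finsupp.single i 1) ∧
    (b.repr.conjAlgEquiv k).toAlgHom.comp ρ (DKt k q) =
      Finsupp.lift (Fin t →₀ k) k (Fin t) (fun i => a' i • Finsupp.single i 1) ∧
    (b.repr.conjAlgEquiv k).toAlgHom.comp ρ (DKtinv k q) =
      Finsupp.lift (Fin t →₀ k) k (Fin t) (fun i => (a' i)⁻¹ • Finsupp.single i 1) := by
  refine ⟨b.conjAlgEquiv_repr_eq_lift (f := ρ (DE k q)) fun i => ?_,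
    b.conjAlgEquiv_repr_eq_lift (f := ρ (DF k q)) fun i => ?_,
    b.conjAlgEquiv_repr_eq_lift (f := ρ (DK k q)) fun i => ?_,
    b.conjAlgEquiv_repr_eq_lift (f := ρ (DKinv k q)) fun i => ?_,
    b.conjAlgEquiv_repr_eq_lift (f := ρ (DKt k q)) fun i => ?_,
    b.conjAlgEquiv_repr_eq_lift (f := ρ (DKtinv k q)) fun i => ?_⟩
  · split_ifs with hi
    · rw [map_zero, hb, hv.DE_apply_DF_pow hq0, hi, raisingCoeff_zero, zero_smul]
    · rw [map_smul, b.repr_symm_single_one, hb, hb, hv.DE_apply_DF_pow hq0,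
        hc _ (Nat.pos_of_ne_zero hi) i.isLt]
  · split_ifs with hi
    · rw [b.repr_symm_single_one, hb, hb, ← Module.End.mul_apply, ← pow_succ']
    · rw [map_zero, hb, ← Module.End.mul_apply, ← pow_succ', show (i : ℕ) + 1 = t by omega, hmt]
  · rw [map_smul, b.repr_symm_single_one, hb, hv.DK_apply_DF_pow, ha]
  · rw [map_smul, b.repr_symm_single_one, hb, hv.DKinv_apply_DF_pow, ha]
  · rw [map_smul, b.repr_symm_single_one, hb, hv.DKt_apply_DF_pow, ha']
  · rw [map_smul, b.repr_symm_single_one, hb, hv.DKtinv_apply_DF_pow, ha']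

theorem zCond (hv : IsHighestWeightVector ρ μ ν v) (hq0 : q ≠ 0) {w lam : k}
    (hμ : μ = w * lam) (hν : ν = w⁻¹ * lam) {d : ℕ} (b : Basis (Fin d) k V)
    (hb : ∀ i, b i = (ρ (DF k q) ^ (i : ℕ)) v) (hmd : (ρ (DF k q) ^ d) v = 0) :
    ZCond k q w lam d ((b.repr.conjAlgEquiv k).toAlgHom.comp ρ) := by
  subst hμ hν
  exact hv.conjAlgEquiv_repr_eq_string hq0 b hb hmd
    (fun i => qint k q i * w * (lam * q ^ (1 - (i : ℤ)) - lam⁻¹ * q ^ ((i : ℤ) - 1)) / (q - q⁻¹))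
    (fun i => w * lam * q ^ (-(2 * (i : ℤ)))) (fun i => w⁻¹ * lam * q ^ (-(2 * (i : ℤ))))
    (fun i _ _ => (raisingCoeff_zE w lam i).symm) (fun _ => rfl) (fun _ => rfl)

theorem lCond (hv : IsHighestWeightVector ρ μ ν v) (hq0 : q ≠ 0) {w : k} {n : ℕ}
    (hμ : μ = w * q ^ n) (hν : ν = w⁻¹ * q ^ n) (b : Basis (Fin (n + 1)) k V)
    (hb : ∀ i, b i = (ρ (DF k q) ^ (i : ℕ)) v) (hmn : (ρ (DF k q) ^ (n + 1)) v = 0) :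
    LCond k q w n ((b.repr.conjAlgEquiv k).toAlgHom.comp ρ) := by
  subst hμ hν
  exact hv.conjAlgEquiv_repr_eq_string hq0 b hb hmn
    (fun i => w * qint k q i * qint k q (n + 1 - i))
    (fun i => w * q ^ ((n : ℤ) - 2 * (i : ℤ))) (fun i => w⁻¹ * q ^ ((n : ℤ) - 2 * (i : ℤ)))
    (fun i _ hi => (raisingCoeff_lE hq0 w hi.le).symm)
    (fun i => (mul_zpow_neg_two_mul hq0 w n i).symm)
    (fun i => (mul_zpow_neg_two_mul hq0 w⁻¹ n i).symm)

end IsHighestWeightVector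

end HighestWeight

theorem classification_root_of_unity_general (k : Type) [Field k] [IsAlgClosed k]
    (q : k) (hq0 : q ≠ 0) (d : ℕ) (hq : IsPrimitiveRoot (q ^ 2) d)
    (V : Type) [AddCommGroup V] [Module k V] [FiniteDimensional k V] [Nontrivial V]
    (ρ : Dq k q →ₐ[k] Module.End k V)
    (hsimple : ∀ W : Submodule k V, (∀ (x : Dq k q), ∀ v ∈ W, ρ x v ∈ W) → W = ⊥ ∨ W = ⊤)
    (hEd : ρ (DE k q) ^ d = 0) (hFd : ρ (DF k q) ^ d = 0) :
    (∃ w lam : k, w ≠ 0 ∧ lam ≠ 0 ∧ lam ^ (2 * d) ≠ 1 ∧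
      ∃ ρ' : Dq k q →ₐ[k] Module.End k (Fin d →₀ k), ZCond k q w lam d ρ' ∧
        ∃ e : V ≃ₗ[k] (Fin d →₀ k),
          ∀ (x : Dq k q) (v : V), e (ρ x v) = ρ' x (e v)) ∨
    (∃ w : k, w ≠ 0 ∧ ∃ n : ℕ, n < d ∧
      ∃ ρ' : Dq k q →ₐ[k] Module.End k (Fin (n + 1) →₀ k), LCond k q w n ρ' ∧
        ∃ e : V ≃ₗ[k] (Fin (n + 1) →₀ k),
          ∀ (x : Dq k q) (v : V), e (ρ x v) = ρ' x (e v)) := by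
  obtain ⟨μ, ν, v, hv⟩ := exists_isHighestWeightVector ρ hEd
  obtain ⟨t, htd, hmt, hm⟩ := Module.End.exists_minimal_pow_apply_eq_zero hFd v
  have ht0 : 0 < t := Nat.pos_of_ne_zero (by rintro rfl; exact hv.ne_zero (by simpa using hmt))
  have hli := hv.linearIndependent hq htd hm
  set b := Basis.mk hli (hv.span_DF_pow_eq_top hq0 hsimple hmt).ge
  have hb : ∀ i, b i = (ρ (DF k q) ^ (i : ℕ)) v := Basis.mk_apply hli _
  have hintertwine : ∀ (x : Dq k q) (u : V),
      b.repr (ρ x u) = (b.repr.conjAlgEquiv k).toAlgHom.comp ρ x (b.repr u) := by simp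
  have hμ := hv.DK_weight_ne_zero
  have hν := hv.DKt_weight_ne_zero
  rcases raisingCoeff_first_zero_cases hq0 hν hq ht0 htd
      (hv.raisingCoeff_eq_zero hq0 hmt (hm _ (by omega)))
      (fun s h0 hst => hv.raisingCoeff_ne_zero hq0 hsimple hmt hli h0 hst) with ⟨rfl, hμν⟩ | hμν
  · obtain ⟨lam, hlam⟩ := IsAlgClosed.exists_pow_nat_eq (μ * ν) two_pos
    have hlam0 : lam ≠ 0 := by rintro rfl; simp [hμ, hν] at hlam
    refine Or.inl ⟨μ / lam, lam, div_ne_zero hμ hlam0, hlam0, by rwa [pow_mul, hlam], _,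
      hv.zCond hq0 (div_mul_cancel₀ μ hlam0).symm ?_ b hb hmt, b.repr, hintertwine⟩
    rw [inv_div, div_mul_eq_mul_div, ← sq, hlam, mul_div_cancel_left₀ _ hμ]
  · obtain ⟨n, rfl⟩ : ∃ n, t = n + 1 := ⟨t - 1, by omega⟩
    refine Or.inr ⟨μ / q ^ n, div_ne_zero hμ (pow_ne_zero n hq0), n, by omega, _,
      hv.lCond hq0 (div_mul_cancel₀ μ (pow_ne_zero n hq0)).symm ?_ b hb hmt, b.repr, hintertwine⟩
    rw [Nat.add_sub_cancel, ← pow_mul, mul_comm 2 n, pow_mul] at hμν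
    field_simp
    linear_combination hμν

/-- at a primitive `d`-th root of unity `q²`, every finite-dimensional
simple weight `D_q`-module killed by `E^d` and `F^d` is isomorphic to some `Z(w,λ)`
with `λ^{2d} ≠ 1` or to some `L(w,n)` with `0 ≤ n < d`. -/
theorem classification_root_of_unity (k : Type) [Field k] [IsAlgClosed k]
    (q : k) (hq0 : q ≠ 0) (d : ℕ) (hd : 1 < d) (hq : IsPrimitiveRoot (q ^ 2) d)
    (V : Type) [AddCommGroup V] [Module k V] [FiniteDimensional k V] [Nontrivial V]
    (ρ : Dq k q →ₐ[k] Module.End k V)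
    (hsimple : ∀ W : Submodule k V, (∀ (x : Dq k q), ∀ v ∈ W, ρ x v ∈ W) → W = ⊥ ∨ W = ⊤)
    (hKdiag : (⨆ μ : k, (ρ (DK k q)).eigenspace μ) = ⊤)
    (hKtdiag : (⨆ μ : k, (ρ (DKt k q)).eigenspace μ) = ⊤)
    (hEd : ρ (DE k q) ^ d = 0) (hFd : ρ (DF k q) ^ d = 0) :
    (∃ w lam : k, w ≠ 0 ∧ lam ≠ 0 ∧ lam ^ (2 * d) ≠ 1 ∧
      ∃ ρ' : Dq k q →ₐ[k] Module.End k (Fin d →₀ k), ZCond k q w lam d ρ' ∧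
        ∃ e : V ≃ₗ[k] (Fin d →₀ k),
          ∀ (x : Dq k q) (v : V), e (ρ x v) = ρ' x (e v)) ∨
    (∃ w : k, w ≠ 0 ∧ ∃ n : ℕ, n < d ∧
      ∃ ρ' : Dq k q →ₐ[k] Module.End k (Fin (n + 1) →₀ k), LCond k q w n ρ' ∧
        ∃ e : V ≃ₗ[k] (Fin (n + 1) →₀ k),
          ∀ (x : Dq k q) (v : V), e (ρ x v) = ρ' x (e v)) :=
  classification_root_of_unity_general k q hq0 d hq V ρ hsimple hEd hFd
end
end
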